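/- arXiv:2008.06368 — 6 statements merged into one kernel-verified Lean document; each statement's English description precedes it below -/
import Mathlib

section
/- Let b > 0 and 0 < δ < b, and let b_h ≥ 0 satisfy |b − b_h| ≤ δ. Then |Φ(−b) − Φ(−b_h)| ≤ K(b,δ) · δ · Φ(−b), where K(b,δ) := b + 2/b + 1/b³ + (b + 1/b)·(1 + 1/(b−δ)²)·exp((2bδ − δ²)/2). (This is the core estimate of Proposition 2.9 on the relative error of FORM estimates: if the distances b, b_h of two limit-state surfaces to the origin differ by at most δ, the FORM probabilities Φ(−b), Φ(−b_h) have relative error at most K(b,δ)·δ.) -/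
/-!
The difference `Φ(-b) - Φ(-b_h)` is the Gaussian mass of an interval of length at most `δ`
lying at distance at least `b - δ` from the origin, so it is at most `δ φ(b - δ)`, and
`φ(b - δ) = φ(b) exp((2bδ - δ²)/2)`. The density is then compared with the tail through the
Mills-ratio bound `φ(b) ≤ (b + 1/b) Φ(-b)`, which follows by integrating the derivative of
`-t φ(t) / (1 + t²)`, namely `(1 - 2 / (1 + t²)²) φ(t) ≤ φ(t)`, over `(-∞, -b]`.
This bounds the difference by `(b + 1/b) exp((2bδ - δ²)/2) δ Φ(-b)`, and the other terms of
`K(b, δ)` are nonnegative.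
-/

open MeasureTheory ProbabilityTheory Set

/-- The standard normal cumulative distribution function. -/
noncomputable def Phi (x : ℝ) : ℝ := (gaussianReal 0 1 (Set.Iic x)).toReal

open Real Filter Topology

local notation "φ" => gaussianPDFReal 0 1

lemma gaussianPDFReal_zero_one (t : ℝ) : φ t = (√(2 * π))⁻¹ * exp (-t ^ 2 / 2) := by
  simp [gaussianPDFReal]

lemma gaussianPDFReal_zero_one_neg (t : ℝ) : φ (-t) = φ t := by
  simp only [gaussianPDFReal_zero_one, neg_sq]

lemma gaussianPDFReal_zero_one_le_of_abs_le {a t : ℝ} (h : |a| ≤ |t|) : φ t ≤ φ a := by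
  have hsq : a ^ 2 ≤ t ^ 2 := sq_le_sq.mpr h
  simp only [gaussianPDFReal_zero_one]
  gcongr ?_ * exp ?_
  linarith

lemma gaussianPDFReal_zero_one_sub (b δ : ℝ) :
    φ (b - δ) = φ b * exp ((2 * b * δ - δ ^ 2) / 2) := by
  rw [gaussianPDFReal_zero_one, gaussianPDFReal_zero_one, mul_assoc, ← exp_add]
  ring_nf

lemma hasDerivAt_gaussianPDFReal_zero_one (t : ℝ) : HasDerivAt φ (-t * φ t) t := by
  have hexponent : HasDerivAt (fun t : ℝ => -t ^ 2 / 2) (-t) t :=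
    ((hasDerivAt_pow 2 t).neg.div_const 2).congr_deriv (by ring)
  rw [funext gaussianPDFReal_zero_one]
  exact (hexponent.exp.const_mul (√(2 * π))⁻¹).congr_deriv (by ring)

lemma tendsto_gaussianPDFReal_zero_one_atBot : Tendsto φ atBot (𝓝 0) := by
  have hexp : Tendsto (fun t : ℝ => exp (-t ^ 2 / 2)) atBot (𝓝 0) := by
    have := (tendsto_rpow_abs_mul_exp_neg_mul_sq_cocompact one_half_pos 0).mono_left
      atBot_le_cocompact
    simpa [neg_div, div_eq_inv_mul] using this
  simpa [funext gaussianPDFReal_zero_one] using hexp.const_mul (√(2 * π))⁻¹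

lemma Phi_eq_integral_Iic (x : ℝ) : Phi x = ∫ t in Iic x, φ t := by
  rw [Phi, gaussianReal_apply_eq_integral 0 one_ne_zero,
    ENNReal.toReal_ofReal (integral_nonneg (gaussianPDFReal_nonneg 0 1))]

lemma Phi_sub_Phi_eq_integral_Ioc {u v : ℝ} (h : u ≤ v) :
    Phi v - Phi u = ∫ t in Ioc u v, φ t := by
  rw [Phi_eq_integral_Iic, Phi_eq_integral_Iic, ← Iic_union_Ioc_eq_Iic h,
    setIntegral_union (Iic_disjoint_Ioc le_rfl) measurableSet_Ioc
      (integrable_gaussianPDFReal 0 1).integrableOn (integrable_gaussianPDFReal 0 1).integrableOn]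
  ring

lemma Phi_nonneg (x : ℝ) : 0 ≤ Phi x := ENNReal.toReal_nonneg

lemma abs_Phi_neg_sub_Phi_neg_le {a u v : ℝ} (ha : 0 ≤ a) (hau : a ≤ u) (hav : a ≤ v) :
    |Phi (-u) - Phi (-v)| ≤ φ a * |u - v| := by
  wlog huv : u ≤ v generalizing u v
  · rw [abs_sub_comm, abs_sub_comm u]
    exact this hav hau (le_of_not_ge huv)
  have hdens : ∀ t ∈ Ioc (-v) (-u), ‖φ t‖ ≤ φ a := fun t ht => by
    rw [Real.norm_of_nonneg (gaussianPDFReal_nonneg 0 1 t)]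
    exact gaussianPDFReal_zero_one_le_of_abs_le <| by
      rw [abs_of_nonneg ha, abs_of_nonpos (by linarith [ht.2])]
      linarith [ht.2]
  rw [Phi_sub_Phi_eq_integral_Ioc (neg_le_neg huv), ← Real.norm_eq_abs, abs_sub_comm,
    abs_of_nonneg (by linarith)]
  calc ‖∫ t in Ioc (-v) (-u), φ t‖ ≤ φ a * volume.real (Ioc (-v) (-u)) :=
        norm_setIntegral_le_of_norm_le_const measure_Ioc_lt_top hdens
    _ = φ a * (v - u) := by
        rw [measureReal_def, Real.volume_Ioc, ENNReal.toReal_ofReal (by linarith)]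
        ring

noncomputable def millsPrimitive (t : ℝ) : ℝ := -t / (1 + t ^ 2) * φ t

lemma hasDerivAt_millsPrimitive (t : ℝ) :
    HasDerivAt millsPrimitive ((1 - 2 / (1 + t ^ 2) ^ 2) * φ t) t := by
  have h1 : (1 + t ^ 2) ≠ 0 := by positivity
  have hquot : HasDerivAt (fun t : ℝ => -t / (1 + t ^ 2)) ((t ^ 2 - 1) / (1 + t ^ 2) ^ 2) t :=
    ((hasDerivAt_neg t).div ((hasDerivAt_pow 2 t).const_add 1) h1).congr_deriv (by ring)
  refine (hquot.mul (hasDerivAt_gaussianPDFReal_zero_one t)).congr_deriv ?_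
  field_simp
  ring

lemma abs_one_sub_two_div_le_one (t : ℝ) : |1 - 2 / (1 + t ^ 2) ^ 2| ≤ 1 := by
  have hpos : 0 < (1 + t ^ 2) ^ 2 := by positivity
  have hle : 2 / (1 + t ^ 2) ^ 2 ≤ 2 :=
    div_le_self zero_le_two (one_le_pow₀ (le_add_of_nonneg_right (sq_nonneg t)))
  rw [abs_le]
  constructor <;> linarith [div_pos two_pos hpos]

lemma tendsto_millsPrimitive_atBot : Tendsto millsPrimitive atBot (𝓝 0) := by
  refine squeeze_zero_norm (fun t => ?_) tendsto_gaussianPDFReal_zero_one_atBot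
  rw [millsPrimitive, norm_mul, Real.norm_of_nonneg (gaussianPDFReal_nonneg 0 1 t)]
  refine mul_le_of_le_one_left (gaussianPDFReal_nonneg 0 1 t) ?_
  rw [norm_div, norm_neg, Real.norm_eq_abs, Real.norm_of_nonneg (by positivity)]
  rw [div_le_one (by positivity)]
  nlinarith [abs_nonneg t, sq_abs t, sq_nonneg (|t| - 1)]

lemma div_one_add_sq_mul_gaussianPDFReal_le_Phi_neg (x : ℝ) :
    x / (1 + x ^ 2) * φ x ≤ Phi (-x) := by
  set f : ℝ → ℝ := fun t => (1 - 2 / (1 + t ^ 2) ^ 2) * φ t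
  have hf_le : ∀ t, ‖f t‖ ≤ φ t := fun t => by
    rw [norm_mul, Real.norm_of_nonneg (gaussianPDFReal_nonneg 0 1 t)]
    exact mul_le_of_le_one_left (gaussianPDFReal_nonneg 0 1 t) (abs_one_sub_two_div_le_one t)
  have hf_int : IntegrableOn f (Iic (-x)) := by
    refine Integrable.mono (integrable_gaussianPDFReal 0 1).integrableOn ?_ ?_
    · exact (by fun_prop : Measurable f).aestronglyMeasurable
    · filter_upwards with t
      rw [Real.norm_of_nonneg (gaussianPDFReal_nonneg 0 1 t)]
      exact hf_le t
  have hftc : ∫ t in Iic (-x), f t = millsPrimitive (-x) - 0 :=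
    integral_Iic_of_hasDerivAt_of_tendsto' (fun t _ => hasDerivAt_millsPrimitive t) hf_int
      tendsto_millsPrimitive_atBot
  calc x / (1 + x ^ 2) * φ x = ∫ t in Iic (-x), f t := by
        rw [hftc, sub_zero, millsPrimitive, gaussianPDFReal_zero_one_neg, neg_neg, neg_sq]
    _ ≤ ∫ t in Iic (-x), φ t :=
        setIntegral_mono hf_int (integrable_gaussianPDFReal 0 1).integrableOn
          fun t => (le_abs_self _).trans (hf_le t)
    _ = Phi (-x) := (Phi_eq_integral_Iic _).symm

lemma gaussianPDFReal_le_Phi_neg {x : ℝ} (hx : 0 < x) : φ x ≤ (x + 1 / x) * Phi (-x) := by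
  have h := div_one_add_sq_mul_gaussianPDFReal_le_Phi_neg x
  have hx' : x + 1 / x = (1 + x ^ 2) / x := by field_simp; ring
  rw [hx', div_mul_eq_mul_div, le_div_iff₀ hx]
  rw [div_mul_eq_mul_div, div_le_iff₀ (by positivity)] at h
  linarith

theorem form_relative_error_general (b δ b_h : ℝ) (hb : 0 < b) (hδb : δ < b)
    (hdist : |b - b_h| ≤ δ) :
    |Phi (-b) - Phi (-b_h)| ≤
      (b + 2 / b + 1 / b ^ 3 +
        (b + 1 / b) * (1 + 1 / (b - δ) ^ 2) * Real.exp ((2 * b * δ - δ ^ 2) / 2)) * δ *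
        Phi (-b) := by
  have hδ : 0 ≤ δ := (abs_nonneg _).trans hdist
  set E := Real.exp ((2 * b * δ - δ ^ 2) / 2)
  have hK : (b + 1 / b) * E ≤
      b + 2 / b + 1 / b ^ 3 + (b + 1 / b) * (1 + 1 / (b - δ) ^ 2) * E := by
    have : 0 ≤ b + 2 / b + 1 / b ^ 3 := by positivity
    have : (b + 1 / b) * E ≤ (b + 1 / b) * (1 + 1 / (b - δ) ^ 2) * E := by
      gcongr ?_ * E
      exact le_mul_of_one_le_right (by positivity) (le_add_of_nonneg_right (by positivity))
    linarith
  calc |Phi (-b) - Phi (-b_h)| ≤ φ (b - δ) * |b - b_h| :=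
        abs_Phi_neg_sub_Phi_neg_le (sub_nonneg.mpr hδb.le) (by linarith)
          (by linarith [(abs_le.mp hdist).2])
    _ ≤ φ b * E * δ := by
        rw [gaussianPDFReal_zero_one_sub]
        gcongr
        exact mul_nonneg (gaussianPDFReal_nonneg 0 1 b) (exp_pos _).le
    _ ≤ (b + 1 / b) * Phi (-b) * E * δ := by
        gcongr
        exact gaussianPDFReal_le_Phi_neg hb
    _ = (b + 1 / b) * E * δ * Phi (-b) := by ring
    _ ≤ _ := mul_le_mul_of_nonneg_right (mul_le_mul_of_nonneg_right hK hδ) (Phi_nonneg _)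

/-- Core estimate of Proposition 2.9: if the distances `b`, `b_h` of two limit-state
surfaces to the origin differ by at most `δ`, then the FORM probabilities `Φ(-b)`,
`Φ(-b_h)` have relative error at most `K(b, δ) · δ`. -/
theorem form_relative_error (b δ b_h : ℝ) (hb : 0 < b) (hδ : 0 < δ) (hδb : δ < b)
    (hbh : 0 ≤ b_h) (hdist : |b - b_h| ≤ δ) :
    |Phi (-b) - Phi (-b_h)| ≤
      (b + 2 / b + 1 / b ^ 3 +
        (b + 1 / b) * (1 + 1 / (b - δ) ^ 2) * Real.exp ((2 * b * δ - δ ^ 2) / 2)) * δ *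
        Phi (-b) :=
  form_relative_error_general b δ b_h hb hδb hdist
end

section
/- Let (Ω, P) be a probability space, let G, G_h : Ω → ℝ be measurable, let ε > 0, and assume |G(ω) − G_h(ω)| ≤ ε for P-almost every ω. Then |P(G ≤ 0) − P(G_h ≤ 0)| ≤ P(G ∈ (−ε, ε]). Moreover, if additionally there is C_L > 0 such that P(G ∈ (a, b]) ≤ C_L·(b − a) for all −ε ≤ a ≤ b ≤ ε, then |P(G ≤ 0) − P(G_h ≤ 0)| ≤ 2·C_L·ε. (Lemma 4.3: the absolute error of the probability of failure is bounded by the probability mass near the limit state, hence by the Lipschitz constant of the CDF times the approximation error.) -/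
open MeasureTheory Set

/-- Lemma 4.3: the absolute error of the probability of failure is bounded by the
probability mass near the limit state, hence, under a local Lipschitz condition on the
CDF of `G`, by the Lipschitz constant times the approximation error. -/
theorem failure_probability_absolute_error {Ω : Type*} [MeasurableSpace Ω]
    (P : Measure Ω) [IsProbabilityMeasure P]
    (G G_h : Ω → ℝ) (hG : Measurable G) (hGh : Measurable G_h)
    (ε : ℝ) (hε : 0 < ε) (happrox : ∀ᵐ ω ∂P, |G ω - G_h ω| ≤ ε) :
    |(P {ω | G ω ≤ 0}).toReal - (P {ω | G_h ω ≤ 0}).toReal| ≤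
      (P {ω | G ω ∈ Set.Ioc (-ε) ε}).toReal ∧
    ∀ C_L : ℝ, 0 < C_L →
      (∀ a b : ℝ, -ε ≤ a → a ≤ b → b ≤ ε →
        (P {ω | G ω ∈ Set.Ioc a b}).toReal ≤ C_L * (b - a)) →
      |(P {ω | G ω ≤ 0}).toReal - (P {ω | G_h ω ≤ 0}).toReal| ≤ 2 * C_L * ε := by
  set A := {ω | G ω ≤ 0} with hA
  set B := {ω | G_h ω ≤ 0} with hB
  set S := {ω | G ω ∈ Set.Ioc (-ε) ε} with hS
  have h1 : P A ≤ P B + P S := by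
    refine le_trans (measure_mono_ae ?_) (measure_union_le B S)
    filter_upwards [happrox] with ω hω hωA
    by_cases hb : G_h ω ≤ 0
    · exact Or.inl hb
    · right
      have := abs_le.mp hω
      have hωA' : G ω ≤ 0 := hωA
      push_neg at hb
      exact ⟨by linarith [this.1], by linarith⟩
  have h2 : P B ≤ P A + P S := by
    refine le_trans (measure_mono_ae ?_) (measure_union_le A S)
    filter_upwards [happrox] with ω hω hωB
    by_cases ha : G ω ≤ 0
    · exact Or.inl ha
    · right
      have := abs_le.mp hω
      have hωB' : G_h ω ≤ 0 := hωB
      push_neg at ha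
      exact ⟨by linarith, by linarith [this.2]⟩
  have fA := measure_ne_top P A
  have fB := measure_ne_top P B
  have fS := measure_ne_top P S
  have h1' : (P A).toReal ≤ (P B).toReal + (P S).toReal := by
    rw [← ENNReal.toReal_add fB fS]
    exact ENNReal.toReal_mono (by finiteness) h1
  have h2' : (P B).toReal ≤ (P A).toReal + (P S).toReal := by
    rw [← ENNReal.toReal_add fA fS]
    exact ENNReal.toReal_mono (by finiteness) h2
  have key : |(P A).toReal - (P B).toReal| ≤ (P S).toReal := by
    rw [abs_sub_le_iff]
    constructor <;> linarith
  refine ⟨key, fun C_L hCL hLip => ?_⟩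
  have := hLip (-ε) ε (le_refl _) (by linarith) (le_refl _)
  calc |(P A).toReal - (P B).toReal| ≤ (P S).toReal := key
    _ ≤ C_L * (ε - (-ε)) := this
    _ = 2 * C_L * ε := by ring
end

section
/- Let σ > 0 and β > 0, and let μ be the Gaussian measure on ℝ with mean 0 and variance σ², whose density is φ_σ(w) = exp(−w²/(2σ²))/(σ√(2π)). Then φ_σ(−β) ≤ (β/σ² + 1/β + 1/(βσ²) + 1/β³) · μ((−∞, −β]). Consequently, for all a ≤ b ≤ −β one has μ((a, b]) ≤ (β/σ² + 1/β + 1/(βσ²) + 1/β³) · μ((−∞, −β]) · (b − a). (Lemma 4.5: the local Lipschitz constant of the Gaussian CDF on (−∞, −β] is bounded by an explicit constant times the probability of failure P_f = μ((−∞, −β]).) -/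
/-!
Write `f` for the density of `N(0, v)`. Since `f' x = -(x / v) f x`, the function
`t ↦ -v f t / t` is an antiderivative of `(1 + v / t²) f t` that vanishes at `-∞`, so
`(v / β) f(-β) = ∫_{x ≤ -β} (1 + v / x²) f x ≤ (1 + v / β²) P(X ≤ -β)`: this is the Mills-ratio
bound `f(-β) ≤ (β / v + 1 / β) P(X ≤ -β)`. As `f` increases on `(-∞, 0]`, the mass of `(a, b]`
with `b ≤ -β` is at most `f(-β) (b - a)`.
-/

open MeasureTheory ProbabilityTheory Set Real Filter Topology
open scoped NNReal

lemma hasDerivAt_gaussianPDFReal (μ : ℝ) (v : ℝ≥0) (x : ℝ) :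
    HasDerivAt (gaussianPDFReal μ v) (-(x - μ) / v * gaussianPDFReal μ v x) x := by
  have hexp : HasDerivAt (fun t => -(t - μ) ^ 2 / (2 * v)) (-(x - μ) / v) x :=
    ((((hasDerivAt_id x).sub_const μ).pow 2).neg.div_const (2 * (v : ℝ))).congr_deriv (by
      norm_num
      ring)
  refine (hexp.exp.const_mul (√(2 * π * v))⁻¹).congr_deriv ?_
  rw [gaussianPDFReal]
  ring

lemma monotoneOn_gaussianPDFReal (μ : ℝ) (v : ℝ≥0) :
    MonotoneOn (gaussianPDFReal μ v) (Iic μ) := by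
  intro x _ y hy hxy
  have hy : y ≤ μ := hy
  simp only [gaussianPDFReal]
  gcongr ?_ * rexp (?_ / _)
  nlinarith

lemma tendsto_gaussianPDFReal_atBot (μ : ℝ) (v : ℝ≥0) :
    Tendsto (gaussianPDFReal μ v) atBot (𝓝 0) := by
  rcases eq_or_ne v 0 with rfl | hv
  · exact tendsto_const_nhds.congr fun x => by simp
  have hsq : Tendsto (fun x : ℝ => (x - μ) ^ 2) atBot atTop :=
    ((tendsto_pow_atTop two_ne_zero).comp
      (tendsto_neg_atBot_atTop.atTop_add (tendsto_const_nhds (x := μ)))).congr fun x => by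
        simp only [Function.comp_apply]; ring
  have hexp := tendsto_exp_atBot.comp
    ((tendsto_neg_atTop_atBot.comp hsq).atBot_div_const (by positivity : (0 : ℝ) < 2 * v))
  simpa [gaussianPDFReal_def] using hexp.const_mul (√(2 * π * v))⁻¹

lemma gaussianReal_toReal_eq_setIntegral (μ : ℝ) {v : ℝ≥0} (hv : v ≠ 0) (s : Set ℝ) :
    (gaussianReal μ v s).toReal = ∫ x in s, gaussianPDFReal μ v x := by
  rw [gaussianReal_apply_eq_integral μ hv, ENNReal.toReal_ofReal]
  exact integral_nonneg (gaussianPDFReal_nonneg μ v)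

lemma gaussianReal_Ioc_le_gaussianPDFReal_mul (μ : ℝ) {v : ℝ≥0} (hv : v ≠ 0) {a b c : ℝ}
    (hab : a ≤ b) (hbc : b ≤ c) (hc : c ≤ μ) :
    (gaussianReal μ v (Ioc a b)).toReal ≤ gaussianPDFReal μ v c * (b - a) := by
  rw [gaussianReal_toReal_eq_setIntegral μ hv]
  calc ∫ x in Ioc a b, gaussianPDFReal μ v x
      ≤ ∫ _ in Ioc a b, gaussianPDFReal μ v c := by
        refine setIntegral_mono_on (integrable_gaussianPDFReal μ v).integrableOn
          (integrable_const _) measurableSet_Ioc fun x hx => ?_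
        exact monotoneOn_gaussianPDFReal μ v (hx.2.trans (hbc.trans hc)) hc (hx.2.trans hbc)
    _ = gaussianPDFReal μ v c * (b - a) := by
        rw [setIntegral_const, Real.volume_real_Ioc_of_le hab, smul_eq_mul, mul_comm]

section Tail

variable {v : ℝ≥0} {β : ℝ}

lemma one_add_div_sq_mul_gaussianPDFReal_le (hβ : 0 < β) {x : ℝ} (hx : x ≤ -β) :
    (1 + v / x ^ 2) * gaussianPDFReal 0 v x ≤ (1 + v / β ^ 2) * gaussianPDFReal 0 v x := by
  have : (v : ℝ) / x ^ 2 ≤ v / β ^ 2 :=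
    div_le_div_of_nonneg_left v.coe_nonneg (by positivity) (by nlinarith)
  exact mul_le_mul_of_nonneg_right (by linarith) (gaussianPDFReal_nonneg 0 v x)

lemma integrableOn_one_add_div_sq_mul_gaussianPDFReal (hβ : 0 < β) :
    IntegrableOn (fun x => (1 + v / x ^ 2) * gaussianPDFReal 0 v x) (Iic (-β)) := by
  refine ((integrable_gaussianPDFReal 0 v).const_mul (1 + v / β ^ 2)).integrableOn.mono' ?_ ?_
  · exact (((measurable_id.pow_const 2).const_div _).const_add 1
      |>.mul (measurable_gaussianPDFReal 0 v)).aestronglyMeasurable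
  · refine (ae_restrict_iff' measurableSet_Iic).2 (ae_of_all _ fun x hx => ?_)
    rw [norm_of_nonneg (by positivity [gaussianPDFReal_nonneg 0 v x])]
    exact one_add_div_sq_mul_gaussianPDFReal_le hβ hx

lemma integral_Iic_one_add_div_sq_mul_gaussianPDFReal (hv : v ≠ 0) (hβ : 0 < β) :
    ∫ x in Iic (-β), (1 + v / x ^ 2) * gaussianPDFReal 0 v x =
      v / β * gaussianPDFReal 0 v (-β) := by
  have hderiv : ∀ x ∈ Iic (-β), HasDerivAt (fun t => -(v * t⁻¹ * gaussianPDFReal 0 v t))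
      ((1 + v / x ^ 2) * gaussianPDFReal 0 v x) x := by
    intro x hx
    have hx0 : x ≠ 0 := by linarith [mem_Iic.mp hx]
    refine (((hasDerivAt_inv hx0).const_mul (v : ℝ)).mul
      (hasDerivAt_gaussianPDFReal 0 v x)).neg.congr_deriv ?_
    field_simp
    ring
  have hlim : Tendsto (fun t => -(v * t⁻¹ * gaussianPDFReal 0 v t)) atBot (𝓝 0) := by
    simpa using ((tendsto_inv_atBot_zero.const_mul (v : ℝ)).mul
      (tendsto_gaussianPDFReal_atBot 0 v)).neg
  rw [integral_Iic_of_hasDerivAt_of_tendsto' hderiv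
    (integrableOn_one_add_div_sq_mul_gaussianPDFReal hβ) hlim]
  ring

lemma gaussianPDFReal_le_mul_gaussianReal_Iic (hv : v ≠ 0) (hβ : 0 < β) :
    gaussianPDFReal 0 v (-β) ≤ (β / v + 1 / β) * (gaussianReal 0 v (Iic (-β))).toReal := by
  have hv' : (0 : ℝ) < v := NNReal.coe_pos.2 (pos_iff_ne_zero.2 hv)
  have hcomp : v / β * gaussianPDFReal 0 v (-β) ≤
      (1 + v / β ^ 2) * (gaussianReal 0 v (Iic (-β))).toReal := by
    rw [← integral_Iic_one_add_div_sq_mul_gaussianPDFReal hv hβ,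
      gaussianReal_toReal_eq_setIntegral 0 hv, ← integral_const_mul]
    exact setIntegral_mono_on (integrableOn_one_add_div_sq_mul_gaussianPDFReal hβ)
      ((integrable_gaussianPDFReal 0 v).const_mul _).integrableOn measurableSet_Iic
      fun x hx => one_add_div_sq_mul_gaussianPDFReal_le hβ hx
  calc gaussianPDFReal 0 v (-β) = β / v * (v / β * gaussianPDFReal 0 v (-β)) := by
        field_simp
    _ ≤ β / v * ((1 + v / β ^ 2) * (gaussianReal 0 v (Iic (-β))).toReal) := by gcongr
    _ = (β / v + 1 / β) * (gaussianReal 0 v (Iic (-β))).toReal := by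
        field_simp

end Tail

/-- Lemma 4.5: the density `φ_σ(-β)` of the centred Gaussian measure with variance `σ²`
is bounded by an explicit constant times the probability of failure `μ((-∞, -β])`;
consequently, the local Lipschitz constant of the Gaussian CDF on `(-∞, -β]` is bounded
by that constant times the probability of failure. -/
theorem lipschitz_constant_bound (σ β : ℝ) (hσ : 0 < σ) (hβ : 0 < β) :
    Real.exp (-β ^ 2 / (2 * σ ^ 2)) / (σ * Real.sqrt (2 * Real.pi)) ≤
      (β / σ ^ 2 + 1 / β + 1 / (β * σ ^ 2) + 1 / β ^ 3) *
        ((gaussianReal 0 ⟨σ ^ 2, sq_nonneg σ⟩) (Set.Iic (-β))).toReal ∧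
    ∀ a b : ℝ, a ≤ b → b ≤ -β →
      ((gaussianReal 0 ⟨σ ^ 2, sq_nonneg σ⟩) (Set.Ioc a b)).toReal ≤
        (β / σ ^ 2 + 1 / β + 1 / (β * σ ^ 2) + 1 / β ^ 3) *
          ((gaussianReal 0 ⟨σ ^ 2, sq_nonneg σ⟩) (Set.Iic (-β))).toReal * (b - a) := by
  set v : ℝ≥0 := ⟨σ ^ 2, sq_nonneg σ⟩
  have hv : v ≠ 0 := fun h => (pow_pos hσ 2).ne' (congrArg NNReal.toReal h)
  have hdensity : rexp (-β ^ 2 / (2 * σ ^ 2)) / (σ * √(2 * π)) = gaussianPDFReal 0 v (-β) := by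
    rw [gaussianPDFReal, show (v : ℝ) = σ ^ 2 from rfl, sqrt_mul (by positivity) (σ ^ 2),
      sqrt_sq hσ.le]
    ring_nf
  have hconst : β / σ ^ 2 + 1 / β ≤ β / σ ^ 2 + 1 / β + 1 / (β * σ ^ 2) + 1 / β ^ 3 := by
    have : 0 ≤ 1 / (β * σ ^ 2) + 1 / β ^ 3 := by positivity
    linarith
  have hmills : gaussianPDFReal 0 v (-β) ≤ (β / σ ^ 2 + 1 / β + 1 / (β * σ ^ 2) + 1 / β ^ 3) *
      (gaussianReal 0 v (Iic (-β))).toReal :=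
    (gaussianPDFReal_le_mul_gaussianReal_Iic hv hβ).trans
      (mul_le_mul_of_nonneg_right hconst ENNReal.toReal_nonneg)
  refine ⟨hdensity ▸ hmills, fun a b hab hb => ?_⟩
  calc (gaussianReal 0 v (Ioc a b)).toReal ≤ gaussianPDFReal 0 v (-β) * (b - a) :=
        gaussianReal_Ioc_le_gaussianPDFReal_mul 0 hv hab hb (by linarith)
    _ ≤ _ := mul_le_mul_of_nonneg_right hmills (by linarith)
end

section
/- Let σ > 0, β > 0 and 0 < ε < β, and let μ be the Gaussian measure on ℝ with mean 0 and variance σ², whose density is φ_σ(w) = exp(−w²/(2σ²))/(σ√(2π)). Then φ_σ(−β + ε) ≤ (β + 1/β) · (1/σ² + 1/(β − ε)²) · exp((2βε − ε²)/(2σ²)) · μ((−∞, −β]). (Inequality (4.6): the bound C_{2,2} on the local Lipschitz constant of the Gaussian CDF in the non-one-sided case, evaluated at −β + ε.) -/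
open MeasureTheory ProbabilityTheory Set

open Filter Topology
open scoped NNReal

/-! The function `G x = -(v x / (x² + v)) φ(x)`, with `φ` the centred Gaussian density of variance
`v`, has derivative `(1 - 2v² / (x² + v)²) φ(x) ≤ φ(x)` and vanishes at `-∞`; integrating over
`(-∞, -β]` gives the Mills-ratio bound `μ((-∞, -β]) ≥ v β / (β² + v) · φ(β)`. Since
`φ(-β + ε) = φ(β) exp((2βε - ε²) / (2v))`, the claim reduces to
`(β + 1/β)(1/v + 1/(β - ε)²) · v β / (β² + v) ≥ 1`, which holds because `0 < β - ε ≤ β`. -/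

namespace ProbabilityTheory

lemma gaussianPDFReal_zero_eq_div {v : ℝ≥0} {σ : ℝ} (hσ : 0 ≤ σ) (hv : (v : ℝ) = σ ^ 2)
    (x : ℝ) :
    gaussianPDFReal 0 v x = Real.exp (-x ^ 2 / (2 * σ ^ 2)) / (σ * Real.sqrt (2 * Real.pi)) := by
  have hsqrt : Real.sqrt (2 * Real.pi * σ ^ 2) = σ * Real.sqrt (2 * Real.pi) := by
    rw [Real.sqrt_mul (by positivity), Real.sqrt_sq hσ, mul_comm]
  rw [gaussianPDFReal, hv, sub_zero, hsqrt]
  ring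

lemma gaussianPDFReal_zero_add (v : ℝ≥0) (x y : ℝ) :
    gaussianPDFReal 0 v (x + y) =
      gaussianPDFReal 0 v x * Real.exp (-(2 * x * y + y ^ 2) / (2 * v)) := by
  simp only [gaussianPDFReal, sub_zero, mul_assoc, ← Real.exp_add]
  ring_nf

lemma hasDerivAt_gaussianPDFReal (μ : ℝ) (v : ℝ≥0) (x : ℝ) :
    HasDerivAt (gaussianPDFReal μ v) (-((x - μ) / v) * gaussianPDFReal μ v x) x := by
  have hexp : HasDerivAt (fun x ↦ -(x - μ) ^ 2 / (2 * v)) (-((x - μ) / v)) x := by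
    refine ((((hasDerivAt_id' x).sub_const μ).fun_pow 2).fun_neg.div_const
      (2 * (v : ℝ))).congr_deriv ?_
    norm_num
    ring
  refine (hexp.exp.const_mul (√(2 * Real.pi * v))⁻¹).congr_deriv ?_
  rw [gaussianPDFReal]
  ring

lemma tendsto_gaussianPDFReal_atBot (μ : ℝ) {v : ℝ≥0} (hv : v ≠ 0) :
    Tendsto (gaussianPDFReal μ v) atBot (𝓝 0) := by
  have hsq : Tendsto (fun x : ℝ ↦ (x - μ) ^ 2 / (2 * v)) atBot atTop := by
    refine Tendsto.atTop_div_const (by positivity) ?_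
    refine ((tendsto_pow_atTop two_ne_zero).comp
      (tendsto_atTop_add_const_right _ μ tendsto_neg_atBot_atTop)).congr fun x ↦ ?_
    simp only [Function.comp]
    ring
  have := (Real.tendsto_exp_atBot.comp (tendsto_neg_atTop_atBot.comp hsq)).const_mul
    (√(2 * Real.pi * v))⁻¹
  rw [mul_zero] at this
  refine this.congr fun x ↦ ?_
  simp only [Function.comp, gaussianPDFReal, neg_div]

lemma hasDerivAt_neg_mul_div_mul_gaussianPDFReal {v : ℝ≥0} (hv : v ≠ 0) (x : ℝ) :
    HasDerivAt (fun x ↦ -(v * x / (x ^ 2 + v)) * gaussianPDFReal 0 v x)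
      ((1 - 2 * v ^ 2 / (x ^ 2 + v) ^ 2) * gaussianPDFReal 0 v x) x := by
  have hden : x ^ 2 + v ≠ 0 := by positivity
  have hratio : HasDerivAt (fun x : ℝ ↦ v * x / (x ^ 2 + v))
      ((v * (x ^ 2 + v) - v * x * (2 * x)) / (x ^ 2 + v) ^ 2) x := by
    have hsq : HasDerivAt (fun x : ℝ ↦ x ^ 2 + v) (2 * x) x := by
      simpa using (hasDerivAt_pow 2 x).add_const (v : ℝ)
    simpa using ((hasDerivAt_id' x).const_mul (v : ℝ)).fun_div hsq hden
  refine (hratio.fun_neg.mul (hasDerivAt_gaussianPDFReal 0 v x)).congr_deriv ?_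
  field_simp
  ring

lemma tendsto_neg_mul_div_mul_gaussianPDFReal_atBot {v : ℝ≥0} (hv : v ≠ 0) :
    Tendsto (fun x ↦ -(v * x / (x ^ 2 + v)) * gaussianPDFReal 0 v x) atBot (𝓝 0) := by
  refine squeeze_zero_norm' ?_
    (by simpa using (tendsto_gaussianPDFReal_atBot 0 hv).const_mul (v : ℝ))
  filter_upwards [eventually_le_atBot (-1 : ℝ)] with x hx
  have hratio : |v * x / (x ^ 2 + v)| ≤ v := by
    rw [abs_div, abs_of_pos (by positivity : (0 : ℝ) < x ^ 2 + v), div_le_iff₀ (by positivity),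
      abs_mul, NNReal.abs_eq, abs_of_neg (by linarith)]
    gcongr
    nlinarith [v.coe_nonneg]
  rw [norm_mul, norm_neg, Real.norm_eq_abs, Real.norm_of_nonneg (gaussianPDFReal_nonneg 0 v x)]
  exact mul_le_mul_of_nonneg_right hratio (gaussianPDFReal_nonneg 0 v x)

lemma neg_mul_div_mul_gaussianPDFReal_le_gaussianReal_Iic {v : ℝ≥0} (hv : v ≠ 0) (a : ℝ) :
    -(v * a / (a ^ 2 + v)) * gaussianPDFReal 0 v a ≤ (gaussianReal 0 v (Iic a)).toReal := by
  set g : ℝ → ℝ := fun x ↦ (1 - 2 * v ^ 2 / (x ^ 2 + v) ^ 2) * gaussianPDFReal 0 v x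
  have hfactor : ∀ x : ℝ, 0 ≤ 2 * v ^ 2 / (x ^ 2 + v) ^ 2 ∧ 2 * v ^ 2 / (x ^ 2 + v) ^ 2 ≤ 2 := by
    intro x
    refine ⟨by positivity, div_le_of_le_mul₀ (by positivity) zero_le_two ?_⟩
    nlinarith [sq_nonneg x, v.coe_nonneg, mul_nonneg (sq_nonneg x) v.coe_nonneg]
  have hg_le : ∀ x, g x ≤ gaussianPDFReal 0 v x := fun x ↦
    mul_le_of_le_one_left (gaussianPDFReal_nonneg 0 v x) (by linarith [(hfactor x).1])
  have hg_norm : ∀ x, ‖g x‖ ≤ gaussianPDFReal 0 v x := by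
    intro x
    rw [norm_mul, Real.norm_of_nonneg (gaussianPDFReal_nonneg 0 v x)]
    refine mul_le_of_le_one_left (gaussianPDFReal_nonneg 0 v x) ?_
    rw [Real.norm_eq_abs, abs_le]
    constructor <;> linarith [hfactor x]
  have hg_int : Integrable g :=
    (integrable_gaussianPDFReal 0 v).mono'
      ((by fun_prop : Measurable fun x : ℝ ↦ 1 - 2 * (v : ℝ) ^ 2 / (x ^ 2 + v) ^ 2).mul
        (measurable_gaussianPDFReal 0 v)).aestronglyMeasurable
      (ae_of_all _ hg_norm)
  have hftc : ∫ x in Iic a, g x = -(v * a / (a ^ 2 + v)) * gaussianPDFReal 0 v a - 0 :=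
    integral_Iic_of_hasDerivAt_of_tendsto'
      (fun x _ ↦ hasDerivAt_neg_mul_div_mul_gaussianPDFReal hv x) hg_int.integrableOn
      (tendsto_neg_mul_div_mul_gaussianPDFReal_atBot hv)
  rw [gaussianReal_apply_eq_integral 0 hv,
    ENNReal.toReal_ofReal (integral_nonneg (gaussianPDFReal_nonneg 0 v)), ← sub_zero (-_ * _),
    ← hftc]
  exact integral_mono hg_int.integrableOn (integrable_gaussianPDFReal 0 v).integrableOn hg_le

end ProbabilityTheory

lemma one_le_lipschitzBound_mul_millsRatio {σ β d : ℝ} (hσ : σ ≠ 0) (hd : 0 < d) (hdβ : d ≤ β) :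
    1 ≤ (β + 1 / β) * (1 / σ ^ 2 + 1 / d ^ 2) * (σ ^ 2 * β / (β ^ 2 + σ ^ 2)) := by
  have hβ : 0 < β := hd.trans_le hdβ
  rw [show (β + 1 / β) * (1 / σ ^ 2 + 1 / d ^ 2) * (σ ^ 2 * β / (β ^ 2 + σ ^ 2)) =
      (β ^ 2 + 1) * (d ^ 2 + σ ^ 2) / (d ^ 2 * (β ^ 2 + σ ^ 2)) by field_simp,
    one_le_div (by positivity)]
  have hd2 : d ^ 2 ≤ β ^ 2 := pow_le_pow_left₀ hd.le hdβ 2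
  nlinarith [mul_le_mul_of_nonneg_left hd2 (sq_nonneg σ), sq_nonneg d, sq_nonneg σ]

/-- Inequality (4.6): the bound `C_{2,2}` on the local Lipschitz constant of the CDF
of the Gaussian measure with mean `0` and variance `σ²` in the non-one-sided case: the
density at `-β + ε` is bounded by an explicit constant times `μ((-∞, -β])`. -/
theorem lipschitz_constant_bound_non_one_sided (σ β ε : ℝ) (hσ : 0 < σ) (hβ : 0 < β)
    (hε : 0 < ε) (hεβ : ε < β) :
    Real.exp (-(-β + ε) ^ 2 / (2 * σ ^ 2)) / (σ * Real.sqrt (2 * Real.pi)) ≤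
      (β + 1 / β) * (1 / σ ^ 2 + 1 / (β - ε) ^ 2) *
        Real.exp ((2 * β * ε - ε ^ 2) / (2 * σ ^ 2)) *
        ((gaussianReal 0 ⟨σ ^ 2, sq_nonneg σ⟩) (Set.Iic (-β))).toReal := by
  set v : ℝ≥0 := ⟨σ ^ 2, sq_nonneg σ⟩
  set C := (β + 1 / β) * (1 / σ ^ 2 + 1 / (β - ε) ^ 2)
  have hvσ : (v : ℝ) = σ ^ 2 := rfl
  have hv : v ≠ 0 := fun h ↦ (pow_pos hσ 2).ne' (congrArg NNReal.toReal h)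
  have hmills : σ ^ 2 * β / (β ^ 2 + σ ^ 2) * gaussianPDFReal 0 v (-β) ≤
      (gaussianReal 0 v (Iic (-β))).toReal := by
    simpa [hvσ, neg_div] using neg_mul_div_mul_gaussianPDFReal_le_gaussianReal_Iic hv (-β)
  have hC : 1 ≤ C * (σ ^ 2 * β / (β ^ 2 + σ ^ 2)) :=
    one_le_lipschitzBound_mul_millsRatio hσ.ne' (by linarith) (by linarith)
  have hpdf : gaussianPDFReal 0 v (-β) ≤ C * (gaussianReal 0 v (Iic (-β))).toReal := by
    calc gaussianPDFReal 0 v (-β)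
        ≤ C * (σ ^ 2 * β / (β ^ 2 + σ ^ 2)) * gaussianPDFReal 0 v (-β) :=
          le_mul_of_one_le_left (gaussianPDFReal_nonneg 0 v _) hC
      _ = C * (σ ^ 2 * β / (β ^ 2 + σ ^ 2) * gaussianPDFReal 0 v (-β)) := mul_assoc _ _ _
      _ ≤ C * (gaussianReal 0 v (Iic (-β))).toReal :=
          mul_le_mul_of_nonneg_left hmills (by positivity)
  rw [← gaussianPDFReal_zero_eq_div hσ.le hvσ, gaussianPDFReal_zero_add]
  calc gaussianPDFReal 0 v (-β) * Real.exp (-(2 * -β * ε + ε ^ 2) / (2 * v))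
      = gaussianPDFReal 0 v (-β) * Real.exp ((2 * β * ε - ε ^ 2) / (2 * σ ^ 2)) := by
        rw [hvσ]; ring_nf
    _ ≤ _ := by
        rw [mul_right_comm C]
        exact mul_le_mul_of_nonneg_right hpdf (Real.exp_pos _).le
end

section
/- Let n ≥ 1 be a natural number and let A ⊆ ℝⁿ be a nonempty closed convex set with 0 ∉ A, and let b := dist(0, A) be the infimum distance from the origin to A. Then γₙ(A) ≤ Φ(−b). (The FORM estimate is an upper bound for the probability of failure when the failure domain is convex: a convex set at distance b from the origin is contained in a half-space whose Gaussian measure is Φ(−b).) -/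
/-!
Let `p` be the point of `A` nearest to the origin and `u = p / ‖p‖`. Since `A` is convex, it lies
in the half-space `{x | b ≤ ⟪u, x⟫}` with `b = ‖p‖`. The standard Gaussian measure is a Gaussian
measure whose image under the unit functional `⟪u, ·⟫` has mean `0` and variance `‖u‖² = 1`, so
that half-space has measure `Φ(-b)`.
-/

open MeasureTheory ProbabilityTheory Set

noncomputable def stdGaussian (n : ℕ) : Measure (EuclideanSpace ℝ (Fin n)) :=
  (Measure.pi fun _ : Fin n => gaussianReal 0 1).map
    (MeasurableEquiv.toLp 2 (Fin n → ℝ))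

open Metric RealInnerProductSpace

section InnerProductSpace

variable {E : Type*} [NormedAddCommGroup E] [InnerProductSpace ℝ E]

theorem Convex.exists_norm_eq_one_infDist_le_inner [ProperSpace E] {A : Set E}
    (hne : A.Nonempty) (hclosed : IsClosed A) (hconv : Convex ℝ A) (h0 : (0 : E) ∉ A) :
    ∃ u : E, ‖u‖ = 1 ∧ ∀ x ∈ A, infDist 0 A ≤ ⟪u, x⟫ := by
  obtain ⟨p, hpA, hp⟩ := hclosed.exists_infDist_eq_dist hne 0
  have hp0 : p ≠ 0 := ne_of_mem_of_not_mem hpA h0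
  have hnorm : ‖p‖ = infDist 0 A := by rw [hp, dist_zero_left]
  have hproj : ∀ x ∈ A, ⟪0 - p, x - p⟫ ≤ 0 := by
    refine (norm_eq_iInf_iff_real_inner_le_zero hconv hpA).1 ?_
    rw [← dist_eq_norm, ← hp, infDist_eq_iInf]
    simp only [dist_eq_norm]
  refine ⟨‖p‖⁻¹ • p, norm_smul_inv_norm hp0, fun x hx => ?_⟩
  have hpx : ‖p‖ ^ 2 ≤ ⟪p, x⟫ := by
    have := hproj x hx
    rw [zero_sub, inner_neg_left, inner_sub_right, real_inner_self_eq_norm_sq] at this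
    linarith
  have hpos : 0 < ‖p‖ := norm_pos_iff.2 hp0
  rw [real_inner_smul_left, ← hnorm, le_inv_mul_iff₀ hpos]
  nlinarith

variable [FiniteDimensional ℝ E] [MeasurableSpace E] [BorelSpace E]

theorem stdGaussian_map_innerSL {u : E} (hu : ‖u‖ = 1) :
    (ProbabilityTheory.stdGaussian E).map (innerSL ℝ u) = gaussianReal 0 1 := by
  rw [IsGaussian.map_eq_gaussianReal, integral_strongDual_stdGaussian, variance_dual_stdGaussian,
    innerSL_apply_norm, hu]
  simp

theorem stdGaussian_setOf_inner_le {u : E} (hu : ‖u‖ = 1) (c : ℝ) :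
    ProbabilityTheory.stdGaussian E {x | ⟪u, x⟫ ≤ c} = gaussianReal 0 1 (Iic c) := by
  rw [← stdGaussian_map_innerSL hu, Measure.map_apply (by fun_prop) measurableSet_Iic]
  rfl

end InnerProductSpace

theorem stdGaussian_eq_stdGaussian_euclideanSpace (n : ℕ) :
    _root_.stdGaussian n = ProbabilityTheory.stdGaussian (EuclideanSpace ℝ (Fin n)) :=
  map_pi_eq_stdGaussian

theorem form_upper_bound_general (n : ℕ) (A : Set (EuclideanSpace ℝ (Fin n)))
    (hA_ne : A.Nonempty) (hA_closed : IsClosed A) (hA_conv : Convex ℝ A)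
    (h0 : (0 : EuclideanSpace ℝ (Fin n)) ∉ A) :
    stdGaussian n A ≤ gaussianReal 0 1 (Set.Iic (-(Metric.infDist 0 A))) := by
  obtain ⟨u, hu, hA⟩ := hA_conv.exists_norm_eq_one_infDist_le_inner hA_ne hA_closed h0
  have hsub : A ⊆ {x | ⟪-u, x⟫ ≤ -infDist 0 A} := fun x hx => by
    simpa [inner_neg_left] using hA x hx
  calc stdGaussian n A ≤ stdGaussian n {x | ⟪-u, x⟫ ≤ -infDist 0 A} := measure_mono hsub
    _ = gaussianReal 0 1 (Iic (-infDist 0 A)) := by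
      rw [stdGaussian_eq_stdGaussian_euclideanSpace,
        stdGaussian_setOf_inner_le (by rwa [norm_neg])]

/-- The FORM estimate is an upper bound for the probability of failure when the failure
domain is convex: a closed convex set `A` with `0 ∉ A` at distance `b` from the origin
has Gaussian measure at most `Φ(-b)`. -/
theorem form_upper_bound (n : ℕ) (hn : 1 ≤ n) (A : Set (EuclideanSpace ℝ (Fin n)))
    (hA_ne : A.Nonempty) (hA_closed : IsClosed A) (hA_conv : Convex ℝ A)
    (h0 : (0 : EuclideanSpace ℝ (Fin n)) ∉ A) :
    stdGaussian n A ≤ gaussianReal 0 1 (Set.Iic (-(Metric.infDist 0 A))) :=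
  form_upper_bound_general n A hA_ne hA_closed hA_conv h0
end

section
/- Let c > 1 and 0 < h ≤ 1. Then |(1 − c^h)/h + log c| ≤ (c·(log c)²/2) · h. (Section 6.1: for the ODE y' = −u·y, y(0) = 1, the explicit Euler most likely failure point u_h^{MLFP} = (1 − c^h)/h, with c = y_max, converges to the exact most likely failure point u^{MLFP} = −log c with order O(h) in the time step size h.) -/
/-!
With `L = log c` and `x = L h ≥ 0` we have `c ^ h = exp x`, so the error of the Euler most likely
failure point is `-(exp x - 1 - x) / h`. The Lagrange-type bound
`0 ≤ exp x - 1 - x ≤ x ^ 2 / 2 * exp x` and `exp x = c ^ h ≤ c` for `h ≤ 1` bound it by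
`c x ^ 2 / (2 h) = c L ^ 2 h / 2`.
-/

open Real

namespace Real

lemma one_sub_mul_exp_le_one (x : ℝ) : (1 - x) * exp x ≤ 1 := by
  calc (1 - x) * exp x ≤ exp (-x) * exp x :=
        mul_le_mul_of_nonneg_right (one_sub_le_exp_neg x) (exp_pos x).le
    _ = 1 := by rw [← exp_add, neg_add_cancel, exp_zero]

lemma exp_sub_one_sub_le_sq_div_two_mul_exp {x : ℝ} (hx : 0 ≤ x) :
    exp x - 1 - x ≤ x ^ 2 / 2 * exp x := by
  let f : ℝ → ℝ := fun y ↦ y ^ 2 / 2 * exp y - exp y + 1 + y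
  let f' : ℝ → ℝ := fun y ↦ y ^ 2 / 2 * exp y + (1 - (1 - y) * exp y)
  have hf : ∀ y, HasDerivAt f (f' y) y := by
    intro y
    have hsq : HasDerivAt (fun y : ℝ ↦ y ^ 2 / 2) y y := by
      simpa using (hasDerivAt_pow 2 y).div_const 2
    exact ((((hsq.mul (hasDerivAt_exp y)).sub (hasDerivAt_exp y)).add_const 1).add
      (hasDerivAt_id y)).congr_deriv (by simp only [f']; ring)
  have hf'_nonneg : ∀ y, 0 ≤ f' y := fun y ↦
    add_nonneg (by positivity) (sub_nonneg.mpr (one_sub_mul_exp_le_one y))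
  have hmono := monotone_of_hasDerivAt_nonneg hf hf'_nonneg hx
  simp only [f, exp_zero] at hmono
  linarith

end Real

lemma one_sub_rpow_div_add_log_eq {c h : ℝ} (hc : 0 < c) (hh : h ≠ 0) :
    (1 - c ^ h) / h + log c = -((exp (log c * h) - 1 - log c * h) / h) := by
  rw [rpow_def_of_pos hc]
  field_simp
  ring

/-- Section 6.1: the explicit Euler most likely failure point `(1 - c^h)/h` converges
to the exact most likely failure point `-log c` with order `O(h)` in the step size. -/
theorem euler_mlfp_convergence (c h : ℝ) (hc : 1 < c) (hh : 0 < h) (hh1 : h ≤ 1) :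
    |(1 - c ^ h) / h + Real.log c| ≤ c * Real.log c ^ 2 / 2 * h := by
  set x := log c * h
  have hx : 0 ≤ x := mul_nonneg (log_pos hc).le hh.le
  have hexp_le : exp x ≤ c := by
    rw [← rpow_def_of_pos (zero_lt_one.trans hc)]
    exact rpow_le_self_of_one_le hc.le hh1
  have hremainder_nonneg : 0 ≤ exp x - 1 - x := by linarith [add_one_le_exp x]
  rw [one_sub_rpow_div_add_log_eq (zero_lt_one.trans hc) hh.ne', abs_neg,
    abs_of_nonneg (div_nonneg hremainder_nonneg hh.le), div_le_iff₀ hh]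
  calc exp x - 1 - x ≤ x ^ 2 / 2 * exp x := exp_sub_one_sub_le_sq_div_two_mul_exp hx
    _ ≤ x ^ 2 / 2 * c := by gcongr
    _ = c * log c ^ 2 / 2 * h * h := by ring
end
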